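/- Fix an integer i ≥ 1. For every x ∈ [0,1) and every integer l ≥ 0, ∫_0^1 (1−y)^i y^l d(T̂_i'δ_x)(y) ≥ Σ_{j=0}^∞ binom(i+j−1, j) (1−x)^i x^j (j/(i+j))^l (i/(i+j+1))^i. -/

import Mathlib

open MeasureTheory Filter Set

/-- The transition density `k_i(x,y)` of the generalized Kantorovich operator `T̂_i`
with respect to Lebesgue measure on `[0,1)`. -/
noncomputable def kantKernel (i : ℕ) (x y : ℝ) : ℝ :=
  ((i : ℝ) + 1) * (1 - x) ^ i *
    ∑' j : ℕ, (Nat.choose (i + j + 1) j : ℝ) * x ^ j *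
      Set.indicator (Set.Ico ((j : ℝ) / ((i : ℝ) + j)) (((j : ℝ) + 1) / ((i : ℝ) + (j : ℝ) + 1)))
        (fun _ => (1 : ℝ)) y

/-- The transition probability `T̂_i'δ_x` of the generalized Kantorovich operator. -/
noncomputable def kantTrans (i : ℕ) (x : ℝ) : Measure ℝ :=
  if x = 1 then Measure.dirac 1
  else (volume.restrict (Set.Ico (0:ℝ) 1)).withDensity
    (fun y => ENNReal.ofReal (kantKernel i x y))

namespace KantAux

/-- The `j`-th interval in the partition of `[0,1)`. -/
def Ij (i j : ℕ) : Set ℝ :=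
  Set.Ico ((j : ℝ) / ((i : ℝ) + j)) (((j : ℝ) + 1) / ((i : ℝ) + (j : ℝ) + 1))

lemma kantKernel_eq (i : ℕ) (x y : ℝ) :
    kantKernel i x y = ((i : ℝ) + 1) * (1 - x) ^ i *
      ∑' j : ℕ, (Nat.choose (i + j + 1) j : ℝ) * x ^ j *
        Set.indicator (Ij i j) (fun _ => (1 : ℝ)) y := rfl

variable {i : ℕ}

lemma den_pos (hi : 1 ≤ i) (j : ℕ) : (0:ℝ) < (i : ℝ) + j := by
  have h1 : (1:ℝ) ≤ (i : ℝ) := by exact_mod_cast hi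
  have h2 : (0:ℝ) ≤ (j : ℝ) := Nat.cast_nonneg j
  linarith

lemma den_pos' (hi : 1 ≤ i) (j : ℕ) : (0:ℝ) < (i : ℝ) + j + 1 := by
  have := den_pos hi j; linarith

lemma left_mono (hi : 1 ≤ i) : Monotone (fun j : ℕ => (j : ℝ) / ((i : ℝ) + j)) := by
  apply monotone_nat_of_le_succ
  intro j
  rw [div_le_div_iff₀ (den_pos hi j) (by push_cast; have := den_pos' hi j; push_cast at this; linarith)]
  have h1 : (1:ℝ) ≤ (i : ℝ) := by exact_mod_cast hi
  push_cast
  nlinarith [Nat.cast_nonneg (α := ℝ) j]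

lemma Ij_disjoint (hi : 1 ≤ i) : Pairwise (Function.onFun Disjoint (Ij i)) := by
  have H : ∀ j k : ℕ, j < k → Disjoint (Ij i j) (Ij i k) := by
    intro j k hjk
    apply Set.disjoint_left.2
    rintro y ⟨_, hy2⟩ ⟨hy3, _⟩
    have h1 : ((j : ℝ) + 1) / ((i : ℝ) + (j : ℝ) + 1) ≤ (k : ℝ) / ((i : ℝ) + k) := by
      have := left_mono hi (show j + 1 ≤ k by omega)
      simpa [add_assoc] using this
    linarith [lt_of_lt_of_le hy2 (h1.trans hy3)]
  intro j k hne
  rcases hne.lt_or_gt with h | h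
  · exact H j k h
  · exact (H k j h).symm

lemma Ij_subset (hi : 1 ≤ i) (j : ℕ) : Ij i j ⊆ Set.Ico (0:ℝ) 1 := by
  rintro y ⟨h1, h2⟩
  have hd := den_pos hi j
  have hd' := den_pos' hi j
  constructor
  · exact le_trans (div_nonneg (Nat.cast_nonneg j) hd.le) h1
  · have h3 : ((j : ℝ) + 1) / ((i : ℝ) + j + 1) ≤ 1 := by
      rw [div_le_one hd']
      have : (1:ℝ) ≤ (i : ℝ) := by exact_mod_cast hi
      linarith
    linarith [lt_of_lt_of_le h2 h3]

lemma Ij_exists (hi : 1 ≤ i) {y : ℝ} (hy : y ∈ Set.Ico (0:ℝ) 1) : ∃ j, y ∈ Ij i j := by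
  obtain ⟨hy0, hy1⟩ := hy
  have h1y : (0:ℝ) < 1 - y := by linarith
  have hi0 : (0:ℝ) < (i : ℝ) := by exact_mod_cast Nat.lt_of_lt_of_le Nat.zero_lt_one hi
  set t : ℝ := y * i / (1 - y) with ht_def
  have ht0 : 0 ≤ t := div_nonneg (mul_nonneg hy0 hi0.le) h1y.le
  refine ⟨⌊t⌋₊, ?_, ?_⟩
  · have hj1 : (⌊t⌋₊ : ℝ) ≤ t := Nat.floor_le ht0
    have hj1' : (⌊t⌋₊ : ℝ) * (1 - y) ≤ y * i := (le_div_iff₀ h1y).mp hj1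
    rw [div_le_iff₀ (den_pos hi ⌊t⌋₊)]
    nlinarith
  · have hj2 : t < (⌊t⌋₊ : ℝ) + 1 := Nat.lt_floor_add_one t
    have hj2' : y * i < ((⌊t⌋₊ : ℝ) + 1) * (1 - y) := (div_lt_iff₀ h1y).mp hj2
    rw [lt_div_iff₀ (den_pos' hi ⌊t⌋₊)]
    nlinarith

lemma kernel_collapse (hi : 1 ≤ i) (x : ℝ) {y : ℝ} {j : ℕ} (hy : y ∈ Ij i j) :
    kantKernel i x y = ((i : ℝ) + 1) * (1 - x) ^ i * (Nat.choose (i + j + 1) j : ℝ) * x ^ j := by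
  rw [kantKernel_eq]
  rw [tsum_eq_single j (fun k hk => ?_)]
  · rw [Set.indicator_of_mem hy]
    ring
  · have hnot : y ∉ Ij i k := by
      have hd := Ij_disjoint hi (show k ≠ j from hk)
      exact fun hmem => (Set.disjoint_left.1 hd) hmem hy
    rw [Set.indicator_of_notMem hnot, mul_zero]

lemma choose_identity (hi : 1 ≤ i) (j : ℕ) :
    (i + 1) * Nat.choose (i + j + 1) j * i
      = Nat.choose (i + j - 1) j * ((i + j + 1) * (i + j)) := by
  obtain ⟨m, rfl⟩ : ∃ m, i = m + 1 := ⟨i - 1, (Nat.succ_pred_eq_of_pos hi).symm⟩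
  have e1 : m + 1 + j + 1 = m + j + 2 := by omega
  have e2 : m + 1 + j - 1 = m + j := by omega
  have e3 : m + 1 + j = m + j + 1 := by omega
  rw [e1, e2, e3]
  apply Nat.eq_of_mul_eq_mul_right (Nat.mul_pos (Nat.factorial_pos j) (Nat.factorial_pos m))
  have h1 : Nat.choose (m + j + 2) j * j.factorial * (m + 2).factorial
      = (m + j + 2).factorial := by
    have := Nat.choose_mul_factorial_mul_factorial (show j ≤ m + j + 2 by omega)
    simpa [show m + j + 2 - j = m + 2 by omega] using this
  have h2 : Nat.choose (m + j) j * j.factorial * m.factorial = (m + j).factorial := by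
    have := Nat.choose_mul_factorial_mul_factorial (show j ≤ m + j by omega)
    simpa [show m + j - j = m by omega] using this
  have L : (m + 1 + 1) * Nat.choose (m + j + 2) j * (m + 1) * (j.factorial * m.factorial)
      = (m + j + 2).factorial := by
    have hfac : (m + 2).factorial = (m + 2) * ((m + 1) * m.factorial) := by
      rw [Nat.factorial_succ, Nat.factorial_succ]
    calc (m + 1 + 1) * Nat.choose (m + j + 2) j * (m + 1) * (j.factorial * m.factorial)
        = Nat.choose (m + j + 2) j * j.factorial * ((m + 2) * ((m + 1) * m.factorial)) := by ring
      _ = Nat.choose (m + j + 2) j * j.factorial * (m + 2).factorial := by rw [hfac]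
      _ = (m + j + 2).factorial := h1
  have R : Nat.choose (m + j) j * ((m + j + 2) * (m + j + 1)) * (j.factorial * m.factorial)
      = (m + j + 2).factorial := by
    calc Nat.choose (m + j) j * ((m + j + 2) * (m + j + 1)) * (j.factorial * m.factorial)
        = Nat.choose (m + j) j * j.factorial * m.factorial * ((m + j + 2) * (m + j + 1)) := by
          ring
      _ = (m + j).factorial * ((m + j + 2) * (m + j + 1)) := by rw [h2]
      _ = (m + j + 2).factorial := by
          rw [Nat.factorial_succ (m + j + 1), Nat.factorial_succ (m + j)]; ring
  exact L.trans R.symm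

lemma interval_length (hi : 1 ≤ i) (j : ℕ) :
    ((j : ℝ) + 1) / ((i : ℝ) + (j : ℝ) + 1) - (j : ℝ) / ((i : ℝ) + j)
      = (i : ℝ) / (((i : ℝ) + j + 1) * ((i : ℝ) + j)) := by
  have h1 := den_pos hi j
  have h2 := den_pos' hi j
  field_simp
  ring

end KantAux

open KantAux in
/-- Lower bound for the moments `∫_0^1 (1−y)^i y^l d(T̂_i'δ_x)(y)`. -/
theorem kantorovich_moment_lower_bound (i : ℕ) (hi : 1 ≤ i)
    (x : ℝ) (hx : x ∈ Set.Ico (0:ℝ) 1) (l : ℕ) :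
    (∑' j : ℕ, (Nat.choose (i + j - 1) j : ℝ) * (1-x)^i * x^j *
        ((j:ℝ)/((i:ℝ)+j))^l * ((i:ℝ)/((i:ℝ)+(j:ℝ)+1))^i)
      ≤ ∫ y, (1-y)^i * y^l ∂(kantTrans i x) := by
  obtain ⟨hx0, hx1⟩ := hx
  have hi0 : (0:ℝ) < (i : ℝ) := by exact_mod_cast Nat.lt_of_lt_of_le Nat.zero_lt_one hi
  have hxlt : ‖x‖ < 1 := by rw [Real.norm_eq_abs, abs_of_nonneg hx0]; exact hx1
  rw [kantTrans, if_neg (ne_of_lt hx1)]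
  -- notation
  set g : ℝ → ℝ := fun y => (1 - y) ^ i * y ^ l with hg_def
  set t : ℕ → ℝ := fun j => (Nat.choose (i + j - 1) j : ℝ) * (1-x)^i * x^j *
      ((j:ℝ)/((i:ℝ)+j))^l * ((i:ℝ)/((i:ℝ)+(j:ℝ)+1))^i with ht_def
  set a : ℕ → ℝ := fun j =>
      ((i : ℝ) + 1) * (1 - x) ^ i * (Nat.choose (i + j + 1) j : ℝ) * x ^ j with ha_def
  set m : ℕ → ℝ := fun j =>
      ((j:ℝ)/((i:ℝ)+j))^l * ((i:ℝ)/((i:ℝ)+(j:ℝ)+1))^i with hm_def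
  set len : ℕ → ℝ := fun j => (i : ℝ) / (((i : ℝ) + j + 1) * ((i : ℝ) + j)) with hlen_def
  set b : ℕ → ℝ := fun j => ((i : ℝ) + 1) * (Nat.choose (i + j + 1) j : ℝ) * x ^ j with hb_def
  have hg_meas : Measurable g := by
    apply Measurable.mul <;> apply Measurable.pow_const
    · exact measurable_const.sub measurable_id
    · exact measurable_id
  have ha_nonneg : ∀ j, 0 ≤ a j := by
    intro j
    have h1x : (0:ℝ) ≤ 1 - x := by linarith
    positivity
  have hm_nonneg : ∀ j, 0 ≤ m j := by
    intro j
    have h1 := KantAux.den_pos hi j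
    have h2 := KantAux.den_pos' hi j
    have hj0 : (0:ℝ) ≤ (j : ℝ) := Nat.cast_nonneg j
    positivity
  have ht_nonneg : ∀ j, 0 ≤ t j := by
    intro j
    have h1 := KantAux.den_pos hi j
    have h2 := KantAux.den_pos' hi j
    have h1x : (0:ℝ) ≤ 1 - x := by linarith
    have hj0 : (0:ℝ) ≤ (j : ℝ) := Nat.cast_nonneg j
    positivity
  -- Summability of `t` and `b`
  have ht_sum : Summable t := by
    refine Summable.of_nonneg_of_le ht_nonneg ?_
      (summable_choose_mul_geometric_of_norm_lt_one (i-1) hxlt)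
    · intro j
      have hc : Nat.choose (i + j - 1) j = Nat.choose (j + (i-1)) (i-1) := by
        rw [show i + j - 1 = j + (i - 1) by omega]
        exact Nat.choose_symm_add
      have h1 := KantAux.den_pos hi j
      have h2 := KantAux.den_pos' hi j
      have h1x : (0:ℝ) ≤ 1 - x := by linarith
      have hj0 : (0:ℝ) ≤ (j : ℝ) := Nat.cast_nonneg j
      have hrw : t j = ((Nat.choose (i + j - 1) j : ℕ) : ℝ) * x ^ j *
          ((1-x)^i * (((j:ℝ)/((i:ℝ)+j))^l * ((i:ℝ)/((i:ℝ)+(j:ℝ)+1))^i)) := by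
        simp only [ht_def]; ring
      rw [hrw, hc]
      apply mul_le_of_le_one_right (by positivity)
      apply mul_le_one₀ (pow_le_one₀ h1x (by linarith))
      · positivity
      · apply mul_le_one₀ (pow_le_one₀ (by positivity) ?_) (by positivity)
          (pow_le_one₀ (by positivity) ?_)
        · rw [div_le_one h1]; linarith
        · rw [div_le_one h2]; linarith
  have hb_nonneg : ∀ j, 0 ≤ b j := by
    intro j; have : (0:ℝ) ≤ (i:ℝ) + 1 := by positivity
    simp only [hb_def]; positivity
  have hb_sum : Summable b := by
    have h := (summable_choose_mul_geometric_of_norm_lt_one (i+1) hxlt).mul_left ((i:ℝ)+1)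
    apply h.congr
    intro j
    have hc : Nat.choose (j + (i+1)) (i+1) = Nat.choose (i + j + 1) j := by
      rw [show i + j + 1 = j + (i + 1) by omega]
      exact (Nat.choose_symm_add).symm
    simp only [hb_def, hc, mul_assoc]
  -- The measurable piecewise density
  set D : ℝ → ENNReal := fun y => ∑' j, Set.indicator (Ij i j)
      (fun _ => ENNReal.ofReal (a j)) y with hD_def
  have hD_meas : Measurable D :=
    Measurable.ennreal_tsum fun j => measurable_const.indicator measurableSet_Ico
  have hD_eq : ∀ {j : ℕ} {y : ℝ}, y ∈ Ij i j → D y = ENNReal.ofReal (a j) := by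
    intro j y hy
    have h0 : ∀ k, k ≠ j → Set.indicator (Ij i k) (fun _ => ENNReal.ofReal (a k)) y = 0 :=
      fun k hk => Set.indicator_of_notMem
        (fun hmem => (Set.disjoint_left.1 (KantAux.Ij_disjoint hi hk)) hmem hy) _
    exact (tsum_eq_single j h0).trans (Set.indicator_of_mem hy _)
  have hdens_ae : (fun y => ENNReal.ofReal (kantKernel i x y))
      =ᵐ[volume.restrict (Set.Ico (0:ℝ) 1)] D := by
    filter_upwards [ae_restrict_mem measurableSet_Ico] with y hy
    obtain ⟨j, hj⟩ := KantAux.Ij_exists hi hy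
    rw [KantAux.kernel_collapse hi x hj, hD_eq hj]
  rw [withDensity_congr_ae hdens_ae]
  -- pass to lower Lebesgue integral
  have hg_nonneg_ae : 0 ≤ᵐ[(volume.restrict (Set.Ico (0:ℝ) 1)).withDensity D] g := by
    apply Filter.Eventually.filter_mono
      (Measure.AbsolutelyContinuous.ae_le
        (withDensity_absolutelyContinuous (volume.restrict (Set.Ico (0:ℝ) 1)) D))
    filter_upwards [ae_restrict_mem measurableSet_Ico] with y hy
    have : (0:ℝ) ≤ 1 - y := by linarith [hy.2]
    have hy0 := hy.1
    simp only [hg_def, Pi.zero_apply]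
    positivity
  rw [integral_eq_lintegral_of_nonneg_ae hg_nonneg_ae hg_meas.aestronglyMeasurable]
  rw [lintegral_withDensity_eq_lintegral_mul _ hD_meas
    hg_meas.ennreal_ofReal]
  set F : ℝ → ENNReal := fun y => D y * ENNReal.ofReal (g y) with hF_def
  have hFeq : (fun y => (D * fun y => ENNReal.ofReal (g y)) y) = F := rfl
  -- split the integral
  have hunion : Set.Ico (0:ℝ) 1 = ⋃ j, Ij i j := by
    apply Set.Subset.antisymm
    · exact fun y hy => Set.mem_iUnion.2 (KantAux.Ij_exists hi hy)
    · exact Set.iUnion_subset fun j => KantAux.Ij_subset hi j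
  have hsplit : ∫⁻ y, F y ∂(volume.restrict (Set.Ico (0:ℝ) 1))
      = ∑' j, ∫⁻ y in Ij i j, F y ∂volume := by
    rw [hunion]
    exact lintegral_iUnion (fun j => measurableSet_Ico) (KantAux.Ij_disjoint hi) F
  -- key real identity : a j * m j * len j = t j
  have hkey : ∀ j : ℕ, a j * m j * len j = t j := by
    intro j
    have h1 := KantAux.den_pos hi j
    have h2 := KantAux.den_pos' hi j
    have hne : ((i:ℝ) + j + 1) * ((i:ℝ) + j) ≠ 0 := by positivity
    have hcast : ((i:ℝ) + 1) * (Nat.choose (i + j + 1) j : ℝ) * (i:ℝ)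
        = (Nat.choose (i + j - 1) j : ℝ) * (((i:ℝ) + j + 1) * ((i:ℝ) + j)) := by
      have := KantAux.choose_identity hi j
      exact_mod_cast congrArg (Nat.cast : ℕ → ℝ) this
    have expand : a j * m j * len j
        = (((i:ℝ) + 1) * (Nat.choose (i + j + 1) j : ℝ) * (i:ℝ))
          / (((i:ℝ) + j + 1) * ((i:ℝ) + j))
          * ((1-x)^i * x^j * ((j:ℝ)/((i:ℝ)+j))^l * ((i:ℝ)/((i:ℝ)+(j:ℝ)+1))^i) := by
      simp only [ha_def, hm_def, hlen_def]
      field_simp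
    rw [expand, hcast, mul_div_assoc, div_self hne, mul_one]
    simp only [ht_def]; ring
  -- lower bound on each piece
  have hlow_j : ∀ j : ℕ, ENNReal.ofReal (t j) ≤ ∫⁻ y in Ij i j, F y ∂volume := by
    intro j
    have h1 := KantAux.den_pos hi j
    have h2 := KantAux.den_pos' hi j
    have hvol : volume (Ij i j) = ENNReal.ofReal (len j) := by
      rw [KantAux.Ij, Real.volume_Ico, KantAux.interval_length hi j]
    calc ENNReal.ofReal (t j)
        = ENNReal.ofReal (a j * m j) * volume (Ij i j) := by
          rw [hvol, ← ENNReal.ofReal_mul (mul_nonneg (ha_nonneg j) (hm_nonneg j)), hkey j]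
      _ = ∫⁻ y in Ij i j, ENNReal.ofReal (a j * m j) ∂volume := by
          rw [setLIntegral_const]
      _ ≤ ∫⁻ y in Ij i j, F y ∂volume := by
          apply lintegral_mono_ae
          filter_upwards [ae_restrict_mem measurableSet_Ico] with y hy
          have hy' : y ∈ Ij i j := hy
          rw [ENNReal.ofReal_mul (ha_nonneg j), hF_def]
          simp only
          rw [hD_eq hy']
          apply mul_le_mul_right
          apply ENNReal.ofReal_le_ofReal
          -- m j ≤ g y
          obtain ⟨hyl, hyr⟩ := hy'
          have hy0 : (0:ℝ) ≤ y := le_trans (div_nonneg (Nat.cast_nonneg j) h1.le) hyl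
          have hq : (i:ℝ)/((i:ℝ)+(j:ℝ)+1) ≤ 1 - y := by
            have := (lt_div_iff₀ h2).mp hyr
            rw [div_le_iff₀ h2]
            nlinarith
          have hql : (0:ℝ) ≤ (i:ℝ)/((i:ℝ)+(j:ℝ)+1) := by positivity
          have hpl : (0:ℝ) ≤ (j:ℝ)/((i:ℝ)+j) := div_nonneg (Nat.cast_nonneg j) h1.le
          calc m j = ((j:ℝ)/((i:ℝ)+j))^l * ((i:ℝ)/((i:ℝ)+(j:ℝ)+1))^i := rfl
            _ ≤ y^l * (1-y)^i := by
                apply mul_le_mul (pow_le_pow_left₀ hpl hyl l)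
                  (pow_le_pow_left₀ hql hq i) (by positivity) (by positivity)
            _ = g y := by simp only [hg_def]; ring
  -- upper bound on each piece (for finiteness)
  have hup_j : ∀ j : ℕ, ∫⁻ y in Ij i j, F y ∂volume ≤ ENNReal.ofReal (b j) := by
    intro j
    have h1 := KantAux.den_pos hi j
    have h2 := KantAux.den_pos' hi j
    have hvol : volume (Ij i j) = ENNReal.ofReal (len j) := by
      rw [KantAux.Ij, Real.volume_Ico, KantAux.interval_length hi j]
    have step1 : ∫⁻ y in Ij i j, F y ∂volume
        ≤ ∫⁻ y in Ij i j, ENNReal.ofReal (a j) ∂volume := by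
      apply lintegral_mono_ae
      filter_upwards [ae_restrict_mem measurableSet_Ico] with y hy
      have hy' : y ∈ Ij i j := hy
      have hy01 : y ∈ Set.Ico (0:ℝ) 1 := KantAux.Ij_subset hi j hy'
      rw [hF_def]; simp only
      rw [hD_eq hy']
      calc ENNReal.ofReal (a j) * ENNReal.ofReal (g y)
          ≤ ENNReal.ofReal (a j) * 1 := by
            apply mul_le_mul_right
            rw [ENNReal.ofReal_le_one]
            have h1y : (0:ℝ) ≤ 1 - y := by linarith [hy01.2]
            apply mul_le_one₀ (pow_le_one₀ h1y (by linarith [hy01.1]))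
              (pow_nonneg hy01.1 l) (pow_le_one₀ hy01.1 (by linarith [hy01.2]))
        _ = ENNReal.ofReal (a j) := mul_one _
    have step2 : ∫⁻ y in Ij i j, ENNReal.ofReal (a j) ∂volume ≤ ENNReal.ofReal (b j) := by
      rw [setLIntegral_const, hvol, ← ENNReal.ofReal_mul (ha_nonneg j)]
      apply ENNReal.ofReal_le_ofReal
      have hlen_le : len j ≤ 1 := by
        rw [hlen_def]; simp only
        rw [div_le_one (by positivity)]
        nlinarith [Nat.cast_nonneg (α := ℝ) j]
      have hlen0 : 0 ≤ len j := by
        rw [hlen_def]; simp only; positivity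
      have hab : a j ≤ b j := by
        simp only [ha_def, hb_def]
        have h1x : (0:ℝ) ≤ 1 - x := by linarith
        have hple : (1-x)^i ≤ 1 := pow_le_one₀ h1x (by linarith)
        have : ((i:ℝ) + 1) * (1 - x) ^ i * (Nat.choose (i + j + 1) j : ℝ) * x ^ j
            = (((i:ℝ) + 1) * (Nat.choose (i + j + 1) j : ℝ) * x ^ j) * (1-x)^i := by ring
        rw [this]
        apply mul_le_of_le_one_right (by positivity) hple
      calc a j * len j ≤ b j * 1 :=
            mul_le_mul hab hlen_le hlen0 (hb_nonneg j)
        _ = b j := mul_one _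
    exact step1.trans step2
  -- put everything together
  have hL_low : ENNReal.ofReal (∑' j, t j) ≤ ∫⁻ y, F y ∂(volume.restrict (Set.Ico (0:ℝ) 1)) := by
    rw [hsplit, ENNReal.ofReal_tsum_of_nonneg ht_nonneg ht_sum]
    exact ENNReal.tsum_le_tsum hlow_j
  have hL_up : ∫⁻ y, F y ∂(volume.restrict (Set.Ico (0:ℝ) 1))
      ≤ ENNReal.ofReal (∑' j, b j) := by
    rw [hsplit, ENNReal.ofReal_tsum_of_nonneg hb_nonneg hb_sum]
    exact ENNReal.tsum_le_tsum hup_j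
  have hfin : ∫⁻ y, F y ∂(volume.restrict (Set.Ico (0:ℝ) 1)) ≠ ⊤ :=
    (lt_of_le_of_lt hL_up ENNReal.ofReal_lt_top).ne
  have : (∑' j, t j) = (ENNReal.ofReal (∑' j, t j)).toReal :=
    (ENNReal.toReal_ofReal (tsum_nonneg ht_nonneg)).symm
  rw [hFeq]
  rw [this]
  exact ENNReal.toReal_mono hfin hL_low
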